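/- Suppose competitors' highest bid Z ~ Lognormal(μ, σ) and the advertiser's value V ~ Lognormal(μ', σ') are independent, σ, σ' > 0. In a second price auction where the advertiser bids V/λ (λ > 0), the expected spend per opportunity is S(λ) = E[Z·1{Z ≤ V/λ}] = e^{μ + σ²/2}·Φ((μ' − μ − ln λ − σ²)/√((σ')² + σ²)), where Φ is the standard normal CDF. -/

import Mathlib

/-!
Write `Z = exp (μ + σ X)` and `V = exp (μ' + σ' Y)` with `X, Y` independent standard normals.
The event `Z ≤ V / λ` is `X ≤ t Y` for the affine function `t y = (μ' - μ - log λ + σ' y) / σ`.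
Integrating out `X` first, exponential tilting `φ(x) e^{σx} = e^{σ²/2} φ(x - σ)` gives the lognormal
partial expectation `E[e^{μ+σX} 1{X ≤ t}] = e^{μ+σ²/2} Φ(t - σ)`. Integrating out `Y` then uses
`E[Φ(aY + b)] = P(X - aY ≤ b) = Φ(b / √(1 + a²))`, since `X - aY` is centred Gaussian with
variance `1 + a²`.
-/

open ProbabilityTheory MeasureTheory Real

noncomputable def stdNormCDF (x : ℝ) : ℝ :=
  (gaussianReal 0 1 (Set.Iic x)).toReal

open Set NNReal

lemma gaussianReal_zero_one_map_affine (m : ℝ) (v : ℝ≥0) :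
    (gaussianReal 0 1).map (fun z ↦ m + √(v : ℝ) * z) = gaussianReal m v := by
  have hcomp : (fun z ↦ m + √(v : ℝ) * z) = (m + ·) ∘ (√(v : ℝ) * ·) := rfl
  rw [hcomp, ← Measure.map_map (by fun_prop) (by fun_prop), gaussianReal_map_const_mul,
    gaussianReal_map_const_add, mul_zero, zero_add]
  congr 1
  ext
  simp

lemma measureReal_gaussianReal_Iic (m : ℝ) {v : ℝ≥0} (hv : v ≠ 0) (x : ℝ) :
    (gaussianReal m v).real (Iic x) = stdNormCDF ((x - m) / √(v : ℝ)) := by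
  have hpos : 0 < √(v : ℝ) := by positivity
  rw [← gaussianReal_zero_one_map_affine, map_measureReal_apply (by fun_prop) measurableSet_Iic]
  congr 2
  ext z
  simp [le_div_iff₀ hpos, le_sub_iff_add_le', mul_comm]

lemma measureReal_gaussianReal_eq_setIntegral (m : ℝ) {v : ℝ≥0} (hv : v ≠ 0) {s : Set ℝ}
    (hs : MeasurableSet s) :
    (gaussianReal m v).real s = ∫ x in s, gaussianPDFReal m v x := by
  rw [measureReal_def, gaussianReal_apply_eq_integral m hv,
    ENNReal.toReal_ofReal (setIntegral_nonneg hs fun x _ ↦ gaussianPDFReal_nonneg m v x)]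

lemma gaussianPDFReal_mul_exp (m : ℝ) (v : ℝ≥0) (c x : ℝ) :
    gaussianPDFReal m v x * exp (c * x)
      = exp (c * m + v * c ^ 2 / 2) * gaussianPDFReal (m + v * c) v x := by
  rcases eq_or_ne v 0 with rfl | hv
  · simp [gaussianPDFReal_zero_var]
  have hv' : (v : ℝ) ≠ 0 := by exact_mod_cast hv
  simp only [gaussianPDFReal]
  rw [mul_left_comm, mul_assoc, ← exp_add, ← exp_add]
  congr 2
  field_simp
  ring

lemma setIntegral_exp_mul_gaussianReal (m c : ℝ) {v : ℝ≥0} (hv : v ≠ 0) {s : Set ℝ}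
    (hs : MeasurableSet s) :
    ∫ x in s, exp (c * x) ∂gaussianReal m v
      = exp (c * m + v * c ^ 2 / 2) * (gaussianReal (m + v * c) v).real s := by
  rw [← integral_indicator hs, integral_gaussianReal_eq_integral_smul hv,
    measureReal_gaussianReal_eq_setIntegral _ hv hs, ← integral_const_mul,
    ← integral_indicator hs]
  congr 1 with x
  by_cases hx : x ∈ s <;> simp [hx, gaussianPDFReal_mul_exp]

lemma setIntegral_Iic_exp_affine_gaussianReal (μ σ t : ℝ) :
    ∫ x in Iic t, exp (μ + σ * x) ∂gaussianReal 0 1 = exp (μ + σ ^ 2 / 2) * stdNormCDF (t - σ) := by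
  simp_rw [exp_add μ]
  rw [integral_const_mul, setIntegral_exp_mul_gaussianReal 0 σ one_ne_zero measurableSet_Iic,
    measureReal_gaussianReal_Iic _ one_ne_zero]
  simp [mul_assoc]

lemma exp_le_exp_div_iff {lam σ : ℝ} (hlam : 0 < lam) (hσ : 0 < σ) (μ μ' σ' x y : ℝ) :
    exp (μ + σ * x) ≤ exp (μ' + σ' * y) / lam ↔ x ≤ (μ' - μ - log lam + σ' * y) / σ := by
  rw [le_div_iff₀ hlam, le_div_iff₀ hσ, ← log_le_log_iff (by positivity) (by positivity),
    log_mul (exp_pos _).ne' hlam.ne', log_exp, log_exp]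
  constructor <;> intro h <;> linarith

lemma conv_apply_Iic (μ ν : Measure ℝ) [SFinite ν] (b : ℝ) :
    (μ ∗ ν) (Iic b) = ∫⁻ x, ν (Iic (b - x)) ∂μ := by
  have hs : MeasurableSet ((fun p : ℝ × ℝ ↦ p.1 + p.2) ⁻¹' Iic b) :=
    measurable_add measurableSet_Iic
  rw [Measure.conv, Measure.map_apply measurable_add measurableSet_Iic, Measure.prod_apply hs]
  congr 1 with x
  congr 1 with y
  simp [le_sub_iff_add_le']

lemma integral_stdNormCDF_affine_gaussianReal (a b : ℝ) :
    ∫ y, stdNormCDF (a * y + b) ∂gaussianReal 0 1 = stdNormCDF (b / √(1 + a ^ 2)) := by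
  have hmeas : Measurable fun x ↦ gaussianReal 0 1 (Iic x) :=
    Monotone.measurable fun _ _ h ↦ measure_mono (Iic_subset_Iic.2 h)
  calc ∫ y, stdNormCDF (a * y + b) ∂gaussianReal 0 1
      = (∫⁻ y, gaussianReal 0 1 (Iic (a * y + b)) ∂gaussianReal 0 1).toReal :=
        integral_toReal (hmeas.comp (by fun_prop)).aemeasurable
          (ae_of_all _ fun _ ↦ measure_lt_top _ _)
    _ = (((gaussianReal 0 1).map (-a * ·) ∗ gaussianReal 0 1) (Iic b)).toReal := by
        rw [conv_apply_Iic, lintegral_map (f := fun x ↦ gaussianReal 0 1 (Iic (b - x)))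
          (hmeas.comp (by fun_prop)) (by fun_prop)]
        simp only [neg_mul, sub_neg_eq_add, add_comm b]
    _ = stdNormCDF (b / √(1 + a ^ 2)) := by
        rw [gaussianReal_map_const_mul, gaussianReal_conv_gaussianReal, ← measureReal_def,
          measureReal_gaussianReal_Iic _ (by positivity)]
        simp [add_comm]

theorem stmt11_general (μ σ μ' σ' lam : ℝ) (hσ : 0 < σ) (hlam : 0 < lam) :
    ∫ q : ℝ × ℝ,
        (if Real.exp (μ + σ * q.1) ≤ Real.exp (μ' + σ' * q.2) / lam
          then Real.exp (μ + σ * q.1) else 0)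
        ∂((gaussianReal 0 1).prod (gaussianReal 0 1))
      = Real.exp (μ + σ ^ 2 / 2)
        * stdNormCDF ((μ' - μ - Real.log lam - σ ^ 2) / Real.sqrt (σ' ^ 2 + σ ^ 2)) := by
  set c := μ' - μ - Real.log lam with hc
  set S := {q : ℝ × ℝ | q.1 ≤ (c + σ' * q.2) / σ}
  have hS : MeasurableSet S := measurableSet_le measurable_fst (by fun_prop)
  have hint : Integrable (S.indicator fun q ↦ exp (μ + σ * q.1))
      ((gaussianReal 0 1).prod (gaussianReal 0 1)) := by
    simp_rw [exp_add μ]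
    exact (((integrable_exp_mul_gaussianReal σ).const_mul _).comp_fst _).indicator hS
  have hinner (y : ℝ) : ∫ x, S.indicator (fun q ↦ exp (μ + σ * q.1)) (x, y) ∂gaussianReal 0 1
      = exp (μ + σ ^ 2 / 2) * stdNormCDF (σ' / σ * y + (c / σ - σ)) := by
    have ht : σ' / σ * y + (c / σ - σ) = (c + σ' * y) / σ - σ := by field_simp; ring
    rw [ht, ← setIntegral_Iic_exp_affine_gaussianReal, ← integral_indicator measurableSet_Iic]
    rfl
  have harg : (c / σ - σ) / √(1 + (σ' / σ) ^ 2) = (c - σ ^ 2) / √(σ' ^ 2 + σ ^ 2) := by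
    rw [show 1 + (σ' / σ) ^ 2 = (σ' ^ 2 + σ ^ 2) / σ ^ 2 by field_simp; ring,
      sqrt_div' _ (sq_nonneg σ), sqrt_sq hσ.le]
    field_simp
  have hf : (fun q : ℝ × ℝ ↦ if exp (μ + σ * q.1) ≤ exp (μ' + σ' * q.2) / lam
      then exp (μ + σ * q.1) else 0) = S.indicator fun q ↦ exp (μ + σ * q.1) := by
    ext q
    simp only [indicator, S, mem_ofPred_eq, exp_le_exp_div_iff hlam hσ, ← hc]
  rw [hf, integral_prod_symm _ hint]
  simp_rw [hinner]
  rw [integral_const_mul, integral_stdNormCDF_affine_gaussianReal, harg]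

/-- For independent `Z ~ Lognormal(μ,σ)` and `V ~ Lognormal(μ',σ')`
(realized as `Z = exp(μ + σX)`, `V = exp(μ' + σ'Y)` with `X, Y` i.i.d.
standard normal), the expected second-price spend when bidding `V/λ` is
`E[Z·1{Z ≤ V/λ}] = e^{μ+σ²/2}·Φ((μ' − μ − ln λ − σ²)/√(σ'² + σ²))`. -/
theorem stmt11 (μ σ μ' σ' lam : ℝ) (hσ : 0 < σ) (hσ' : 0 < σ') (hlam : 0 < lam) :
    ∫ q : ℝ × ℝ,
        (if Real.exp (μ + σ * q.1) ≤ Real.exp (μ' + σ' * q.2) / lam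
          then Real.exp (μ + σ * q.1) else 0)
        ∂((gaussianReal 0 1).prod (gaussianReal 0 1))
      = Real.exp (μ + σ ^ 2 / 2)
        * stdNormCDF ((μ' - μ - Real.log lam - σ ^ 2) / Real.sqrt (σ' ^ 2 + σ ^ 2)) :=
  stmt11_general μ σ μ' σ' lam hσ hlam
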